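/- Let X be a topological space that is the disjoint union of open subspaces X_α, α ∈ A. Let {F_β}_{β ∈ B} be the direct system of all compact subspaces of X directed by inclusion, and for each α set F_{α,β} = X_α ∩ F_β. Then for singular cohomology with coefficients in an abelian group G, the natural homomorphisms induced by the inclusions F_{α,β} → F_β give isomorphisms lim H^n_s(F_β;G) ≅ ∏_α lim H^n_s(F_{α,β};G) and lim¹ H^n_s(F_β;G) ≅ ∏_α lim¹ H^n_s(F_{α,β};G) for every n. -/

import Mathlib

set_option autoImplicit false
open Function

namespace Paper


/-! ## Generic subquotients `ker g ⧸ im f` (no need for `g ∘ f = 0`) -/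

section SubQuot

variable {A B C A' B' C' D : Type}
variable [AddCommGroup A] [AddCommGroup B] [AddCommGroup C]
variable [AddCommGroup A'] [AddCommGroup B'] [AddCommGroup C'] [AddCommGroup D]

/-- The subquotient `ker g ⧸ (im f ∩ ker g)` of the "middle" group `B`. -/
def SubQuot (f : A →+ B) (g : B →+ C) : Type :=
  g.ker ⧸ (f.range.addSubgroupOf g.ker)

instance (f : A →+ B) (g : B →+ C) : AddCommGroup (SubQuot f g) :=
  inferInstanceAs (AddCommGroup (g.ker ⧸ (f.range.addSubgroupOf g.ker)))

/-- the class of a cycle -/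
def SubQuot.mk (f : A →+ B) (g : B →+ C) (b : B) (hb : g b = 0) : SubQuot f g :=
  QuotientAddGroup.mk (⟨b, hb⟩ : g.ker)

lemma SubQuot.mk_congr (f : A →+ B) (g : B →+ C) {b b' : B} (h : b = b')
    (hb : g b = 0) (hb' : g b' = 0) : SubQuot.mk f g b hb = SubQuot.mk f g b' hb' := by
  subst h; rfl

lemma SubQuot.mk_surjective (f : A →+ B) (g : B →+ C) :
    ∀ x : SubQuot f g, ∃ b hb, SubQuot.mk f g b hb = x := by
  intro x
  refine QuotientAddGroup.induction_on x ?_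
  intro b
  exact ⟨b.1, b.2, rfl⟩

/-- Functoriality of subquotients: a map of middle groups compatible with kernels and images
induces a map of subquotients. -/
def SubQuot.map {f : A →+ B} {g : B →+ C} {f' : A' →+ B'} {g' : B' →+ C'}
    (u : B →+ B') (hker : ∀ b, g b = 0 → g' (u b) = 0)
    (hrange : ∀ a : A, ∃ a' : A', f' a' = u (f a)) :
    SubQuot f g →+ SubQuot f' g' := by
  refine QuotientAddGroup.map _ _
    ((u.comp g.ker.subtype).codRestrict g'.ker (fun x => ?_)) ?_
  · exact AddMonoidHom.mem_ker.mpr (hker x.1 (AddMonoidHom.mem_ker.mp x.2))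
  · intro x hx
    rcases (AddSubgroup.mem_addSubgroupOf).mp hx with ⟨a, ha⟩
    refine AddSubgroup.mem_comap.mpr ((AddSubgroup.mem_addSubgroupOf).mpr ?_)
    rcases hrange a with ⟨a', ha'⟩
    exact ⟨a', by simp [ha', ha]⟩

@[simp] lemma SubQuot.map_mk {f : A →+ B} {g : B →+ C} {f' : A' →+ B'} {g' : B' →+ C'}
    (u : B →+ B') (hker : ∀ b, g b = 0 → g' (u b) = 0)
    (hrange : ∀ a : A, ∃ a' : A', f' a' = u (f a)) (b : B) (hb : g b = 0) :
    SubQuot.map u hker hrange (SubQuot.mk f g b hb) = SubQuot.mk f' g' (u b) (hker b hb) := rfl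

lemma SubQuot.hom_ext {f : A →+ B} {g : B →+ C} {φ ψ : SubQuot f g →+ D}
    (h : ∀ b hb, φ (SubQuot.mk f g b hb) = ψ (SubQuot.mk f g b hb)) : φ = ψ := by
  ext x
  rcases SubQuot.mk_surjective f g x with ⟨b, hb, rfl⟩
  exact h b hb

/-- lifting a map annihilating the image out of the subquotient. -/
def SubQuot.lift (f : A →+ B) (g : B →+ C) (ψ : B →+ D) (h : ∀ a : A, ψ (f a) = 0) :
    SubQuot f g →+ D := by
  refine QuotientAddGroup.lift _ (ψ.comp g.ker.subtype) ?_
  intro x hx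
  rcases (AddSubgroup.mem_addSubgroupOf).mp hx with ⟨a, ha⟩
  simpa [← ha] using h a

@[simp] lemma SubQuot.lift_mk (f : A →+ B) (g : B →+ C) (ψ : B →+ D)
    (h : ∀ a : A, ψ (f a) = 0) (b : B) (hb : g b = 0) :
    SubQuot.lift f g ψ h (SubQuot.mk f g b hb) = ψ b := rfl

end SubQuot


def AddMonoidHom.pi' {ι : Type} {β : ι → Type} [∀ i, AddZeroClass (β i)]
    {M : Type} [AddZeroClass M] (f : ∀ i, M →+ β i) : M →+ ∀ i, β i where
  toFun m i := f i m
  map_zero' := by funext i; simp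
  map_add' a b := by funext i; simp
structure InvSys (B : Type) [Preorder B] : Type 1 where
  obj : B → Type
  grp : ∀ b, AddCommGroup (obj b)
  map : ∀ {i j : B}, i ≤ j → (obj j →+ obj i)
  map_refl : ∀ i : B, map (le_refl i) = AddMonoidHom.id (obj i)
  map_trans : ∀ {i j k : B} (hij : i ≤ j) (hjk : j ≤ k),
    (map hij).comp (map hjk) = map (hij.trans hjk)
attribute [instance] InvSys.grp
abbrev Chain (B : Type) [Preorder B] (n : ℕ) : Type := Fin (n+1) →o B
def Chain.face {B : Type} [Preorder B] {n : ℕ} (c : Chain B (n+1)) (k : Fin (n+2)) :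
    Chain B n := c.comp (Fin.succAboveOrderEmb k).toOrderHom
lemma Chain.face_succ_zero {B : Type} [Preorder B] {n : ℕ} (c : Chain B (n+1))
    (k : Fin (n+1)) : (Chain.face c k.succ) 0 = c 0 :=
  congrArg c (Fin.succ_succAbove_zero k)
namespace InvSys
variable {B : Type} [Preorder B] (S : InvSys B)
def limSub : AddSubgroup (∀ b, S.obj b) where
  carrier := {x | ∀ (i j : B) (h : i ≤ j), S.map h (x j) = x i}
  add_mem' := by intro a b ha hb i j h; simp [ha i j h, hb i j h]
  zero_mem' := by intro i j h; simp
  neg_mem' := by intro a ha i j h; simp [ha i j h]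
def lim : Type := S.limSub
instance : AddCommGroup S.lim := inferInstanceAs (AddCommGroup S.limSub)
def eqHom {i j : B} (h : i = j) : S.obj j →+ S.obj i := S.map h.le
def C (n : ℕ) : Type := ∀ c : Chain B n, S.obj (c 0)
instance (n : ℕ) : AddCommGroup (S.C n) := Pi.addCommGroup
def evalC (n : ℕ) (c : Chain B n) : S.C n →+ S.obj (c 0) := Pi.evalAddMonoidHom _ c
def d (n : ℕ) : S.C n →+ S.C (n+1) :=
  AddMonoidHom.pi' fun c : Chain B (n+1) =>
    (S.map (c.monotone (Fin.zero_le _))).comp (S.evalC n (Chain.face c 0))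
      + ∑ k : Fin (n+1),
          (-1 : ℤ) ^ ((k : ℕ) + 1) •
            (S.eqHom (Chain.face_succ_zero c k).symm).comp (S.evalC n (Chain.face c k.succ))
lemma d_apply (n : ℕ) (x : S.C n) (c : Chain B (n+1)) :
    S.d n x c =
      S.map (c.monotone (Fin.zero_le _)) (x (Chain.face c 0))
        + ∑ k : Fin (n+1),
            (-1 : ℤ) ^ ((k : ℕ) + 1) •
              S.eqHom (Chain.face_succ_zero c k).symm (x (Chain.face c k.succ)) := by
  show ((S.map (c.monotone (Fin.zero_le _))).comp (S.evalC n (Chain.face c 0))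
      + ∑ k : Fin (n+1),
          (-1 : ℤ) ^ ((k : ℕ) + 1) •
            (S.eqHom (Chain.face_succ_zero c k).symm).comp (S.evalC n (Chain.face c k.succ))) x = _
  rw [AddMonoidHom.add_apply, AddMonoidHom.finset_sum_apply]
  rfl
def limD (k : ℕ) : Type := SubQuot (S.d k) (S.d (k+1))
instance (k : ℕ) : AddCommGroup (S.limD k) := inferInstanceAs (AddCommGroup (SubQuot _ _))
abbrev lim1 : Type := S.limD 0
end InvSys

/-! ## Morphisms of inverse systems over a monotone reindexing -/

/-- A morphism from an inverse system `T` over `B₂` to an inverse system `S` over `B₁`,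
covering a monotone map of index sets `B₁ → B₂`.  It induces maps
`lim T →+ lim S` and `limᵏ T →+ limᵏ S`. -/
structure HomOver {B₁ B₂ : Type} [Preorder B₁] [Preorder B₂]
    (T : InvSys B₂) (S : InvSys B₁) : Type 1 where
  idx : B₁ →o B₂
  app : ∀ b : B₁, T.obj (idx b) →+ S.obj b
  natural : ∀ {i j : B₁} (h : i ≤ j),
    (app i).comp (T.map (idx.monotone h)) = (S.map h).comp (app j)

namespace HomOver

variable {B₁ B₂ : Type} [Preorder B₁] [Preorder B₂] {T : InvSys B₂} {S : InvSys B₁}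
variable (φ : HomOver T S)

lemma natural_apply {i j : B₁} (h : i ≤ j) (hle : φ.idx i ≤ φ.idx j) (y : T.obj (φ.idx j)) :
    φ.app i (T.map hle y) = S.map h (φ.app j y) :=
  DFunLike.congr_fun (φ.natural h) y

/-- the induced map on inverse limits. -/
def limMap : T.lim →+ S.lim :=
  (AddMonoidHom.pi' fun b : B₁ =>
      (φ.app b).comp ((Pi.evalAddMonoidHom _ (φ.idx b)).comp T.limSub.subtype)).codRestrict
    S.limSub (by
      intro x i j h
      show S.map h (φ.app j (x.1 (φ.idx j))) = φ.app i (x.1 (φ.idx i))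
      rw [← φ.natural_apply h (φ.idx.monotone h)]
      exact congrArg (φ.app i) (x.2 _ _ (φ.idx.monotone h)))

lemma limMap_apply (x : T.lim) (b : B₁) :
    (φ.limMap x).1 b = φ.app b (x.1 (φ.idx b)) := rfl

/-- the induced map on Roos cochains. -/
def Cmap (n : ℕ) : T.C n →+ S.C n :=
  AddMonoidHom.pi' fun c : Chain B₁ n => (φ.app (c 0)).comp (T.evalC n (φ.idx.comp c))

lemma Cmap_apply (n : ℕ) (x : T.C n) (c : Chain B₁ n) :
    φ.Cmap n x c = φ.app (c 0) (x (φ.idx.comp c)) := rfl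

lemma Cmap_d_apply (n : ℕ) (x : T.C n) (c : Chain B₁ (n+1)) :
    φ.Cmap (n+1) (T.d n x) c = S.d n (φ.Cmap n x) c := by
  show φ.app (c 0) (T.d n x (φ.idx.comp c)) = _
  rw [T.d_apply, S.d_apply]
  refine (map_add _ _ _).trans ?_
  congr 1
  · exact φ.natural_apply (c.monotone (Fin.zero_le _)) _ _
  · refine (map_sum _ _ _).trans ?_
    refine Finset.sum_congr rfl fun k _ => ?_
    refine (map_zsmul _ _ _).trans ?_
    congr 1
    exact φ.natural_apply (Chain.face_succ_zero c k).symm.le _ _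

/-- the induced map on derived limits `limᵏ⁺¹`. -/
def limDMap (k : ℕ) : T.limD k →+ S.limD k :=
  SubQuot.map (φ.Cmap (k+1))
    (fun b hb => by
      funext c
      rw [← φ.Cmap_d_apply, hb]
      exact congrFun (map_zero (φ.Cmap (k+1+1))) c)
    (fun a => ⟨φ.Cmap k a, by
      funext c
      exact (φ.Cmap_d_apply k a c).symm⟩)

end HomOver




/-! ## Pairs of topological spaces -/

structure TopPair : Type 1 where
  carrier : Type
  top : TopologicalSpace carrier
  sub : Set carrier

attribute [instance] TopPair.top

/-- morphisms of pairs: continuous maps sending the subspace into the subspace. -/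
structure PairMap (P Q : TopPair) : Type where
  toFun : P.carrier → Q.carrier
  continuous : Continuous toFun
  maps_sub : ∀ x ∈ P.sub, toFun x ∈ Q.sub

namespace PairMap

@[ext] lemma ext {P Q : TopPair} {f g : PairMap P Q} (h : f.toFun = g.toFun) : f = g := by
  cases f; cases g; simpa using h

def id (P : TopPair) : PairMap P P := ⟨_root_.id, continuous_id, fun _ h => h⟩

def comp {P Q R : TopPair} (g : PairMap Q R) (f : PairMap P Q) : PairMap P R :=
  ⟨g.toFun ∘ f.toFun, g.continuous.comp f.continuous,
    fun x hx => g.maps_sub _ (f.maps_sub x hx)⟩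

end PairMap

/-- a space, viewed as a pair with empty subspace. -/
def TopPair.ofSpace (X : Type) [TopologicalSpace X] : TopPair := ⟨X, ‹_›, ∅⟩

/-- the underlying absolute pair `(X, ∅)`. -/
def TopPair.abs (P : TopPair) : TopPair := ⟨P.carrier, P.top, ∅⟩

/-- the subspace, as a pair `(A, ∅)`. -/
def TopPair.subPair (P : TopPair) : TopPair := ⟨↥P.sub, inferInstance, ∅⟩

/-- restriction of a pair `(X, A)` to a subset `S ⊆ X`, i.e. the pair `(S, S ∩ A)`. -/
def TopPair.restrict (P : TopPair) (S : Set P.carrier) : TopPair :=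
  ⟨↥S, inferInstance, Subtype.val ⁻¹' P.sub⟩

/-- inclusion `(X, ∅) → (X, A)`. -/
def TopPair.inclAbs (P : TopPair) : PairMap P.abs P :=
  ⟨_root_.id, continuous_id, fun x hx => absurd hx (Set.notMem_empty x)⟩

/-- inclusion `(A, ∅) → (X, ∅)`. -/
def TopPair.inclSub (P : TopPair) : PairMap P.subPair P.abs :=
  ⟨fun a => a.1, continuous_subtype_val, fun x hx => absurd hx (Set.notMem_empty x)⟩

/-- inclusion `(S, S ∩ A) → (X, A)`. -/
def TopPair.inclRestrict (P : TopPair) (S : Set P.carrier) :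
    PairMap (P.restrict S) P :=
  ⟨fun a => a.1, continuous_subtype_val, fun _ hx => hx⟩

/-- inclusion `(S, S ∩ A) → (S', S' ∩ A)` for `S ⊆ S'`. -/
def TopPair.inclRestrict₂ (P : TopPair) {S S' : Set P.carrier} (h : S ⊆ S') :
    PairMap (P.restrict S) (P.restrict S') :=
  ⟨Set.inclusion h, continuous_inclusion h, fun x hx => hx⟩

/-- a continuous map, as a map of pairs with empty subspaces. -/
def PairMap.ofContinuous {X Y : Type} [TopologicalSpace X] [TopologicalSpace Y]
    (f : X → Y) (hf : Continuous f) : PairMap (TopPair.ofSpace X) (TopPair.ofSpace Y) :=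
  ⟨f, hf, fun x hx => absurd hx (Set.notMem_empty x)⟩

/-- restriction of a map of pairs to a subset and its image. -/
def PairMap.restrictImage {P Q : TopPair} (f : PairMap P Q) (S : Set P.carrier) :
    PairMap (P.restrict S) (Q.restrict (f.toFun '' S)) :=
  ⟨fun a => ⟨f.toFun a.1, ⟨a.1, a.2, rfl⟩⟩,
    Continuous.subtype_mk (f.continuous.comp continuous_subtype_val) _,
    fun x hx => f.maps_sub _ hx⟩

/-- restriction of the map of subspaces. -/
def PairMap.restrictSub {P Q : TopPair} (f : PairMap P Q) :
    PairMap P.subPair Q.subPair :=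
  ⟨fun a => ⟨f.toFun a.1, f.maps_sub _ a.2⟩,
    Continuous.subtype_mk (f.continuous.comp continuous_subtype_val) _,
    fun x hx => absurd hx (Set.notMem_empty x)⟩

/-- Homotopy of maps of pairs. -/
def PairHomotopic {P Q : TopPair} (f g : PairMap P Q) : Prop :=
  ∃ F : P.carrier × unitInterval → Q.carrier, Continuous F ∧
    (∀ x, F (x, 0) = f.toFun x) ∧ (∀ x, F (x, 1) = g.toFun x) ∧
    (∀ x ∈ P.sub, ∀ t, F (x, t) ∈ Q.sub)

/-- a one-point pair. -/
def TopPair.IsOnePoint (P : TopPair) : Prop :=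
  (∃ x : P.carrier, ∀ y : P.carrier, y = x) ∧ P.sub = ∅


/-! ## Cohomological sequences -/

structure CohSeq : Type 1 where
  H : ℤ → TopPair → Type
  grp : ∀ n P, AddCommGroup (H n P)
  map : ∀ (n : ℤ) {P Q : TopPair}, PairMap P Q → (H n Q →+ H n P)
  map_id : ∀ (n : ℤ) (P : TopPair), map n (PairMap.id P) = AddMonoidHom.id (H n P)
  map_comp : ∀ (n : ℤ) {P Q R : TopPair} (f : PairMap P Q) (g : PairMap Q R),
    map n (g.comp f) = (map n f).comp (map n g)

attribute [instance] CohSeq.grp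

namespace CohSeq

variable (T : CohSeq)

/-- The index set of compact subspaces of (the total space of) a pair. -/
abbrev CptIdx (P : TopPair) : Type := {F : Set P.carrier // IsCompact F}

/-- The inverse system `F ↦ Hⁿ(F, F ∩ A)` over the compact subspaces of `X`,
with maps induced by inclusions. -/
def cptSys (n : ℤ) (P : TopPair) : InvSys (CptIdx P) where
  obj F := T.H n (P.restrict F.1)
  grp F := T.grp n _
  map {F F'} h := T.map n (P.inclRestrict₂ h)
  map_refl F := by
    show T.map n (P.inclRestrict₂ (subset_refl F.1)) = _
    rw [show P.inclRestrict₂ (subset_refl F.1) = PairMap.id (P.restrict F.1) from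
      PairMap.ext rfl]
    exact T.map_id n _
  map_trans {F F' F''} h h' := by
    show (T.map n (P.inclRestrict₂ h)).comp (T.map n (P.inclRestrict₂ h')) =
      T.map n (P.inclRestrict₂ (Set.Subset.trans h h'))
    rw [← T.map_comp]
    exact congrArg (T.map n) (PairMap.ext rfl)

end CohSeq


/-! ## Cohomology theories in the Eilenberg-Steenrod sense -/

/-- A cohomological sequence: a `CohSeq` together with natural connecting
homomorphisms `δ : Hⁿ(A) → Hⁿ⁺¹(X, A)`. -/
structure CohTheory : Type 1 extends CohSeq where
  δ : ∀ (n : ℤ) (P : TopPair), H n P.subPair →+ H (n+1) P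
  δ_natural : ∀ (n : ℤ) {P Q : TopPair} (f : PairMap P Q),
    (δ n P).comp (map n f.restrictSub) = (map (n+1) f).comp (δ n Q)

namespace CohTheory

variable (T : CohTheory)

/-- exactness of the long exact sequence of the pair `P = (X, A)`:
`⋯ → Hⁿ(X,A) → Hⁿ(X) → Hⁿ(A) → Hⁿ⁺¹(X,A) → ⋯`. -/
def ExactSeq (P : TopPair) : Prop :=
  ∀ n : ℤ,
    (T.map n P.inclAbs).range = (T.map n P.inclSub).ker ∧
    (T.map n P.inclSub).range = (T.δ n P).ker ∧
    (T.δ n P).range = (T.map (n+1) P.inclAbs).ker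

/-- The homotopy axiom on the subcategory of pairs satisfying `Obj`. -/
def HomotopyAxiom (Obj : TopPair → Prop) : Prop :=
  ∀ {P Q : TopPair}, Obj P → Obj Q → ∀ (f g : PairMap P Q), PairHomotopic f g →
    ∀ n : ℤ, T.map n f = T.map n g

/-- The excision axiom on the subcategory of pairs satisfying `Obj`. -/
def ExcisionAxiom (Obj : TopPair → Prop) : Prop :=
  ∀ (P : TopPair), Obj P → ∀ U : Set P.carrier, closure U ⊆ interior P.sub →
    Obj (P.restrict Uᶜ) →
    ∀ n : ℤ, Function.Bijective (T.map n (P.inclRestrict Uᶜ))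

/-- The exactness axiom on the subcategory of pairs satisfying `Obj`. -/
def ExactnessAxiom (Obj : TopPair → Prop) : Prop :=
  ∀ P : TopPair, Obj P → T.ExactSeq P

/-- The dimension axiom on the subcategory of pairs satisfying `Obj`. -/
def DimensionAxiom (Obj : TopPair → Prop) : Prop :=
  ∀ P : TopPair, Obj P → P.IsOnePoint → ∀ n : ℤ, n ≠ 0 → Subsingleton (T.H n P)

/-- A cohomology theory in the Eilenberg-Steenrod sense on the subcategory of
pairs satisfying `Obj`. -/
def IsES (Obj : TopPair → Prop) : Prop :=
  T.HomotopyAxiom Obj ∧ T.ExcisionAxiom Obj ∧ T.ExactnessAxiom Obj ∧ T.DimensionAxiom Obj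

/-- Milnor's additivity axiom on the subcategory of pairs satisfying `Obj`:
if a space `X` of the category is the disjoint union of open subspaces `X_α`, all
belonging to the category, then the inclusions represent `Hⁿ(X)` as the direct
product of the `Hⁿ(X_α)`. -/
def AdditivityAxiom (Obj : TopPair → Prop) : Prop :=
  ∀ (P : TopPair), Obj P → P.sub = ∅ →
    ∀ {ι : Type} (U : ι → Set P.carrier),
      (∀ α, IsOpen (U α)) → (Pairwise (Function.onFun Disjoint U)) →
      (⋃ α, U α) = Set.univ → (∀ α, Obj (P.restrict (U α))) →
      ∀ n : ℤ, Function.Bijective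
        (fun (x : T.H n P) (α : ι) => T.map n (P.inclRestrict (U α)) x)

end CohTheory


/-! ## Compact supports machinery for cohomological sequences -/

namespace CohSeq

variable (T : CohSeq)

/-- The canonical comparison map `Hⁿ(X, A) → lim Hⁿ(F, F ∩ A)` over the compact
subspaces `F` of `X`, given by restrictions. -/
def toCptLim (n : ℤ) (P : TopPair) : T.H n P →+ (T.cptSys n P).lim :=
  (AddMonoidHom.pi' fun F : CptIdx P => T.map n (P.inclRestrict F.1)).codRestrict
    (T.cptSys n P).limSub (by
      intro x F F' h
      show T.map n (P.inclRestrict₂ h) (T.map n (P.inclRestrict F'.1) x)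
        = T.map n (P.inclRestrict F.1) x
      rw [← AddMonoidHom.comp_apply, ← T.map_comp]
      exact congrFun (congrArg _ (congrArg (T.map n) (PairMap.ext rfl))) x)

/-- The morphism of compact-supports inverse systems induced by a map of pairs. -/
def cptHomOver (n : ℤ) {P Q : TopPair} (f : PairMap P Q) :
    HomOver (T.cptSys n Q) (T.cptSys n P) where
  idx := ⟨fun F => ⟨f.toFun '' F.1, F.2.image f.continuous⟩,
    fun _ _ h => Set.image_mono h⟩
  app F := T.map n (f.restrictImage F.1)
  natural {i j} h := by
    show (T.map n (f.restrictImage i.1)).comp (T.map n (Q.inclRestrict₂ _))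
      = (T.map n (P.inclRestrict₂ h)).comp (T.map n (f.restrictImage j.1))
    rw [← T.map_comp, ← T.map_comp]
    exact congrArg (T.map n) (PairMap.ext rfl)

end CohSeq

/-- Condition (2_NT) of a nontrivial internal extension: the collection of short
exact sequences `0 → lim¹ Hⁿ⁻¹(F_α, E_α) → Hⁿ(X, A) → lim Hⁿ(F_α, E_α) → 0`
over the direct system of compact pairs `(F_α, E_α = F_α ∩ A)`. -/
structure NTSes (T : CohSeq) (Obj : TopPair → Prop) : Type 1 where
  ofLim1 : ∀ (n : ℤ) (P : TopPair), (T.cptSys (n-1) P).lim1 →+ T.H n P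
  toLim : ∀ (n : ℤ) (P : TopPair), T.H n P →+ (T.cptSys n P).lim
  injective : ∀ n P, Obj P → Function.Injective (ofLim1 n P)
  exact : ∀ n P, Obj P → (ofLim1 n P).range = (toLim n P).ker
  surjective : ∀ n P, Obj P → Function.Surjective (toLim n P)

/-- Condition (3_NT): naturality of the short exact sequences of (2_NT) with
respect to continuous maps of pairs. -/
def NTSes.Natural {T : CohSeq} {Obj : TopPair → Prop} (E : NTSes T Obj) : Prop :=
  ∀ {P Q : TopPair}, Obj P → Obj Q → ∀ (f : PairMap P Q) (n : ℤ),
    (E.toLim n P).comp (T.map n f) = ((T.cptHomOver n f).limMap).comp (E.toLim n Q) ∧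
    (E.ofLim1 n P).comp ((T.cptHomOver (n-1) f).limDMap 0) = (T.map n f).comp (E.ofLim1 n Q)

/-! ## The categories of pairs considered in the paper -/

/-- A space having the homotopy type of a CW complex. -/
def HasCWHomotopyType (X : Type) [TopologicalSpace X] : Prop :=
  ∃ (C : TopCat.{0}) (_ : TopCat.CWComplex C), Nonempty (ContinuousMap.HomotopyEquiv X C)

/-- The category `K²_CW` of pairs of spaces having the homotopy type of CW complexes. -/
def IsCWPair (P : TopPair) : Prop :=
  HasCWHomotopyType P.carrier ∧ HasCWHomotopyType ↥P.sub

/-- The category `K²_PolC` of pairs of compact polyhedra: pairs homeomorphic to the pair of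
spaces of a finite simplicial complex and a subcomplex. -/
def IsCompactPolyhedralPair (P : TopPair) : Prop :=
  ∃ (N : ℕ) (K L : Geometry.SimplicialComplex ℝ (Fin N → ℝ)),
    K.faces.Finite ∧ L.faces ⊆ K.faces ∧
    ∃ e : P.carrier ≃ₜ ↥K.space, Subtype.val '' (e '' P.sub) = L.space

/-- A polyhedron: a space homeomorphic to the geometric realization of a
simplicial set. -/
def IsPolyhedron (X : Type) [TopologicalSpace X] : Prop :=
  ∃ K : SSet.{0}, Nonempty (X ≃ₜ ↥(SSet.toTop.obj K))

/-- A polyhedral pair. -/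
def IsPolyhedralPair (P : TopPair) : Prop :=
  IsPolyhedron P.carrier ∧ IsPolyhedron ↥P.sub



section SubQuotMore
variable {A B C A' B' C' A'' B'' C'' D : Type}
variable [AddCommGroup A] [AddCommGroup B] [AddCommGroup C]
variable [AddCommGroup A'] [AddCommGroup B'] [AddCommGroup C']
variable [AddCommGroup A''] [AddCommGroup B''] [AddCommGroup C''] [AddCommGroup D]

/-- lifting a homomorphism defined on cycles out of the subquotient. -/
def SubQuot.lift' (f : A →+ B) (g : B →+ C) (χ : g.ker →+ D)
    (h : ∀ (a : A) (ha : g (f a) = 0), χ ⟨f a, ha⟩ = 0) : SubQuot f g →+ D := by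
  refine QuotientAddGroup.lift _ χ ?_
  intro x hx
  rcases (AddSubgroup.mem_addSubgroupOf).mp hx with ⟨a, ha⟩
  have : x = ⟨f a, by rw [ha]; exact AddMonoidHom.mem_ker.mp x.2⟩ := by
    apply Subtype.ext; exact ha.symm
  rw [this]
  exact h a _

@[simp] lemma SubQuot.lift'_mk (f : A →+ B) (g : B →+ C) (χ : g.ker →+ D)
    (h : ∀ (a : A) (ha : g (f a) = 0), χ ⟨f a, ha⟩ = 0) (b : B) (hb : g b = 0) :
    SubQuot.lift' f g χ h (SubQuot.mk f g b hb) = χ ⟨b, hb⟩ := rfl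

end SubQuotMore

/-- precomposition with a fixed homomorphism, as a homomorphism on `Hom`-groups. -/
def precompHom {A B G : Type} [AddCommGroup A] [AddCommGroup B] [AddCommGroup G]
    (f : A →+ B) : (B →+ G) →+ (A →+ G) :=
  AddMonoidHom.mk' (fun φ => φ.comp f) (fun φ ψ => by ext a; simp)

@[simp] lemma precompHom_apply {A B G : Type} [AddCommGroup A] [AddCommGroup B]
    [AddCommGroup G] (f : A →+ B) (φ : B →+ G) : precompHom f φ = φ.comp f := rfl

/-! ## Singular chains, singular homology and singular cohomology -/

noncomputable section Singular

open CategoryTheory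

/-- a continuous map as a morphism in `TopCat`. -/
def toHom {X Y : Type} [TopologicalSpace X] [TopologicalSpace Y] (f : C(X, Y)) :
    TopCat.of X ⟶ TopCat.of Y := TopCat.ofHom f

/-- The set of singular `n`-simplices of `X` (continuous maps from the standard
topological `n`-simplex to `X`, via the singular simplicial set). -/
def Simp (X : Type) [TopologicalSpace X] (n : ℕ) : Type :=
  (TopCat.toSSet.obj (TopCat.of X)).obj (Opposite.op (SimplexCategory.mk n))

/-- the `i`-th face of a singular simplex. -/
def Simp.face {X : Type} [TopologicalSpace X] {n : ℕ} (i : Fin (n+2)) :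
    Simp X (n+1) → Simp X n :=
  (TopCat.toSSet.obj (TopCat.of X)).map (SimplexCategory.δ i).op

/-- the map on singular simplices induced by a continuous map. -/
def mapSimp {X Y : Type} [TopologicalSpace X] [TopologicalSpace Y]
    (f : C(X, Y)) (n : ℕ) : Simp X n → Simp Y n :=
  (TopCat.toSSet.map (toHom f)).app (Opposite.op (SimplexCategory.mk n))

lemma mapSimp_id (X : Type) [TopologicalSpace X] (n : ℕ) (σ : Simp X n) :
    mapSimp (ContinuousMap.id X) n σ = σ := by
  show (TopCat.toSSet.map (𝟙 (TopCat.of X))).app _ σ = σ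
  rw [CategoryTheory.Functor.map_id]
  rfl

lemma mapSimp_comp {X Y Z : Type} [TopologicalSpace X] [TopologicalSpace Y]
    [TopologicalSpace Z] (f : C(X,Y)) (g : C(Y,Z)) (n : ℕ) (σ : Simp X n) :
    mapSimp (g.comp f) n σ = mapSimp g n (mapSimp f n σ) := by
  show (TopCat.toSSet.map (toHom f ≫ toHom g)).app _ σ = _
  rw [CategoryTheory.Functor.map_comp]
  rfl

lemma mapSimp_face {X Y : Type} [TopologicalSpace X] [TopologicalSpace Y] (f : C(X,Y))
    (n : ℕ) (i : Fin (n+2)) (σ : Simp X (n+1)) :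
    mapSimp f n (Simp.face i σ) = Simp.face i (mapSimp f (n+1) σ) :=
  CategoryTheory.NatTrans.naturality_apply (TopCat.toSSet.map (toHom f)) (SimplexCategory.δ i).op σ

/-- The group of singular `n`-chains with coefficients in `G`. -/
abbrev SCh (X : Type) [TopologicalSpace X] (G : Type) [AddCommGroup G] (n : ℕ) : Type :=
  Simp X n →₀ G

variable (G : Type) [AddCommGroup G]

/-- The boundary operator of the singular chain complex. -/
def bd (X : Type) [TopologicalSpace X] (n : ℕ) : SCh X G (n+1) →+ SCh X G n :=
  ∑ i : Fin (n+2),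
    (zsmulAddGroupHom ((-1 : ℤ) ^ (i : ℕ))).comp (Finsupp.mapDomain.addMonoidHom (Simp.face i))

/-- The chain map induced by a continuous map. -/
def mapSCh {X Y : Type} [TopologicalSpace X] [TopologicalSpace Y] (f : C(X,Y)) (n : ℕ) :
    SCh X G n →+ SCh Y G n :=
  Finsupp.mapDomain.addMonoidHom (mapSimp f n)

lemma mapSCh_bd {X Y : Type} [TopologicalSpace X] [TopologicalSpace Y] (f : C(X,Y))
    (n : ℕ) (z : SCh X G (n+1)) :
    mapSCh G f n (bd G X n z) = bd G Y n (mapSCh G f (n+1) z) := by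
  have h : (mapSCh G f n).comp (bd G X n) = (bd G Y n).comp (mapSCh G f (n+1)) := by
    refine Finsupp.addHom_ext fun σ g => ?_
    have hap : ∀ (α β : Type) (u : α → β) (v : α →₀ G),
        Finsupp.mapDomain.addMonoidHom u v = Finsupp.mapDomain u v := fun _ _ _ _ => rfl
    simp only [mapSCh, bd, AddMonoidHom.comp_apply, AddMonoidHom.finset_sum_apply, map_sum,
      zsmulAddGroupHom_apply, map_zsmul]
    refine Finset.sum_congr rfl fun i _ => ?_
    simp only [hap, Finsupp.mapDomain_single, mapSimp_face]
  exact DFunLike.congr_fun h z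

lemma mapSCh_id (X : Type) [TopologicalSpace X] (n : ℕ) (z : SCh X G n) :
    mapSCh G (ContinuousMap.id X) n z = z := by
  have : mapSimp (ContinuousMap.id X) n = _root_.id := funext (mapSimp_id X n)
  show Finsupp.mapDomain _ z = z
  rw [this, Finsupp.mapDomain_id]

lemma mapSCh_comp {X Y Z : Type} [TopologicalSpace X] [TopologicalSpace Y]
    [TopologicalSpace Z] (f : C(X,Y)) (g : C(Y,Z)) (n : ℕ) (z : SCh X G n) :
    mapSCh G (g.comp f) n z = mapSCh G g n (mapSCh G f n z) := by
  have : mapSimp (g.comp f) n = mapSimp g n ∘ mapSimp f n := funext (mapSimp_comp f g n)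
  show Finsupp.mapDomain _ z = Finsupp.mapDomain _ (Finsupp.mapDomain _ z)
  rw [this, Finsupp.mapDomain_comp]

/-! ### Singular homology -/

/-- target of the outgoing boundary map (`0` in degree `0`). -/
def ChPrev (X : Type) [TopologicalSpace X] (G : Type) [AddCommGroup G] : ℕ → Type
  | 0 => PUnit
  | (n+1) => SCh X G n

instance (X : Type) [TopologicalSpace X] (G : Type) [AddCommGroup G] :
    ∀ n, AddCommGroup (ChPrev X G n)
  | 0 => inferInstanceAs (AddCommGroup PUnit)
  | (_+1) => inferInstanceAs (AddCommGroup (SCh _ _ _))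

/-- the outgoing boundary map `∂ : C_n → C_{n-1}` (zero in degree `0`). -/
def bdOut (X : Type) [TopologicalSpace X] : ∀ n, SCh X G n →+ ChPrev X G n
  | 0 => 0
  | (n+1) => bd G X n

/-- The `n`-th singular homology group of `X` with coefficients in `G`. -/
def SHomo (X : Type) [TopologicalSpace X] (n : ℕ) : Type :=
  SubQuot (bd G X n) (bdOut G X n)

instance (X : Type) [TopologicalSpace X] (n : ℕ) : AddCommGroup (SHomo G X n) :=
  inferInstanceAs (AddCommGroup (SubQuot _ _))

lemma bdOut_mapSCh {X Y : Type} [TopologicalSpace X] [TopologicalSpace Y]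
    (f : C(X,Y)) (n : ℕ) (b : SCh X G n) (hb : bdOut G X n b = 0) :
    bdOut G Y n (mapSCh G f n b) = 0 := by
  cases n with
  | zero => rfl
  | succ m =>
      show bd G Y m (mapSCh G f (m+1) b) = 0
      rw [← mapSCh_bd, show bd G X m b = 0 from hb, map_zero]

/-- The map on singular homology induced by a continuous map. -/
def SHomoMap {X Y : Type} [TopologicalSpace X] [TopologicalSpace Y]
    (f : C(X,Y)) (n : ℕ) : SHomo G X n →+ SHomo G Y n :=
  SubQuot.map (mapSCh G f n) (bdOut_mapSCh G f n)
    (fun a => ⟨mapSCh G f (n+1) a, (mapSCh_bd G f n a).symm⟩)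

lemma SHomoMap_mk {X Y : Type} [TopologicalSpace X] [TopologicalSpace Y]
    (f : C(X,Y)) (n : ℕ) (b : SCh X G n) (hb : bdOut G X n b = 0) :
    SHomoMap G f n (SubQuot.mk _ _ b hb) =
      SubQuot.mk _ _ (mapSCh G f n b) (bdOut_mapSCh G f n b hb) := rfl

lemma SHomoMap_id (X : Type) [TopologicalSpace X] (n : ℕ) :
    SHomoMap G (ContinuousMap.id X) n = AddMonoidHom.id (SHomo G X n) := by
  refine SubQuot.hom_ext fun b hb => ?_
  show SubQuot.mk _ _ (mapSCh G (ContinuousMap.id X) n b)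
    (bdOut_mapSCh G (ContinuousMap.id X) n b hb) = SubQuot.mk _ _ b hb
  exact SubQuot.mk_congr _ _ (mapSCh_id G X n b) _ _

lemma SHomoMap_comp {X Y Z : Type} [TopologicalSpace X] [TopologicalSpace Y]
    [TopologicalSpace Z] (f : C(X,Y)) (g : C(Y,Z)) (n : ℕ) :
    (SHomoMap G g n).comp (SHomoMap G f n) = SHomoMap G (g.comp f) n := by
  refine SubQuot.hom_ext fun b hb => ?_
  show SubQuot.mk _ _ (mapSCh G g n (mapSCh G f n b)) (bdOut_mapSCh G g n _
      (bdOut_mapSCh G f n b hb)) =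
    SubQuot.mk _ _ (mapSCh G (g.comp f) n b) (bdOut_mapSCh G (g.comp f) n b hb)
  exact SubQuot.mk_congr _ _ (mapSCh_comp G f g n b).symm _ _

/-! ### Singular cohomology -/

variable (X : Type) [TopologicalSpace X]

/-- Singular `n`-cochains of `X` with values in `G`. -/
abbrev Co (n : ℕ) : Type := SCh X ℤ n →+ G

/-- the coboundary. -/
def cobd (n : ℕ) : Co G X n →+ Co G X (n+1) := precompHom (bd ℤ X n)

/-- source of the incoming coboundary map (`0` in degree `0`). -/
def CoPrev : ℕ → Type
  | 0 => PUnit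
  | (n+1) => Co G X n

instance : ∀ n, AddCommGroup (CoPrev G X n)
  | 0 => inferInstanceAs (AddCommGroup PUnit)
  | (_+1) => inferInstanceAs (AddCommGroup (Co _ _ _))

/-- the incoming coboundary map (zero into degree `0`). -/
def cobdFrom : ∀ n, CoPrev G X n →+ Co G X n
  | 0 => 0
  | (n+1) => cobd G X n

/-- The `n`-th singular cohomology group of `X` with coefficients in `G`. -/
def SCoho (n : ℕ) : Type := SubQuot (cobdFrom G X n) (cobd G X n)

instance (n : ℕ) : AddCommGroup (SCoho G X n) := inferInstanceAs (AddCommGroup (SubQuot _ _))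

variable {X}

lemma cobd_precomp {Y : Type} [TopologicalSpace Y] (f : C(X,Y)) (n : ℕ) (φ : Co G Y n) :
    cobd G X n (φ.comp (mapSCh ℤ f n)) = (cobd G Y n φ).comp (mapSCh ℤ f (n+1)) := by
  refine AddMonoidHom.ext fun z => ?_
  show φ (mapSCh ℤ f n (bd ℤ X n z)) = φ (bd ℤ Y n (mapSCh ℤ f (n+1) z))
  rw [mapSCh_bd]

lemma cobd_mapCo {Y : Type} [TopologicalSpace Y] (f : C(X,Y)) (n : ℕ) (φ : Co G Y n)
    (hφ : cobd G Y n φ = 0) : cobd G X n (precompHom (mapSCh ℤ f n) φ) = 0 := by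
  rw [precompHom_apply, cobd_precomp, hφ]
  rfl

lemma cobdFrom_mapCo {Y : Type} [TopologicalSpace Y] (f : C(X,Y)) (n : ℕ)
    (a : CoPrev G Y n) :
    ∃ a' : CoPrev G X n, cobdFrom G X n a' = precompHom (mapSCh ℤ f n) (cobdFrom G Y n a) := by
  cases n with
  | zero => exact ⟨PUnit.unit, by show (0 : Co G X 0) = _; rw [show cobdFrom G Y 0 a = 0 from rfl, map_zero]⟩
  | succ m =>
      refine ⟨precompHom (mapSCh ℤ f m) a, ?_⟩
      show cobd G X m (a.comp (mapSCh ℤ f m)) = (cobd G Y m a).comp (mapSCh ℤ f (m+1))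
      exact cobd_precomp G f m a

/-- The map on singular cohomology induced by a continuous map. -/
def SCohoMap {Y : Type} [TopologicalSpace Y] (f : C(X,Y)) (n : ℕ) :
    SCoho G Y n →+ SCoho G X n :=
  SubQuot.map (precompHom (mapSCh ℤ f n)) (fun φ hφ => cobd_mapCo G f n φ hφ)
    (cobdFrom_mapCo G f n)

lemma SCohoMap_mk {Y : Type} [TopologicalSpace Y] (f : C(X,Y)) (n : ℕ)
    (φ : Co G Y n) (hφ : cobd G Y n φ = 0) :
    SCohoMap G f n (SubQuot.mk _ _ φ hφ) =
      SubQuot.mk _ _ (φ.comp (mapSCh ℤ f n)) (cobd_mapCo G f n φ hφ) := rfl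

lemma SCohoMap_id (n : ℕ) : SCohoMap G (ContinuousMap.id X) n = AddMonoidHom.id (SCoho G X n) := by
  refine SubQuot.hom_ext fun φ hφ => ?_
  show SubQuot.mk _ _ (φ.comp (mapSCh ℤ (ContinuousMap.id X) n))
    (cobd_mapCo G (ContinuousMap.id X) n φ hφ) = SubQuot.mk _ _ φ hφ
  refine SubQuot.mk_congr _ _ ?_ _ _
  refine AddMonoidHom.ext fun z => ?_
  show φ (mapSCh ℤ (ContinuousMap.id X) n z) = φ z
  rw [mapSCh_id]

lemma SCohoMap_comp {Y Z : Type} [TopologicalSpace Y] [TopologicalSpace Z]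
    (f : C(X,Y)) (g : C(Y,Z)) (n : ℕ) :
    (SCohoMap G f n).comp (SCohoMap G g n) = SCohoMap G (g.comp f) n := by
  refine SubQuot.hom_ext fun φ hφ => ?_
  show SubQuot.mk _ _ ((φ.comp (mapSCh ℤ g n)).comp (mapSCh ℤ f n))
      (cobd_mapCo G f n _ (cobd_mapCo G g n φ hφ)) =
    SubQuot.mk _ _ (φ.comp (mapSCh ℤ (g.comp f) n)) (cobd_mapCo G (g.comp f) n φ hφ)
  refine SubQuot.mk_congr _ _ ?_ _ _
  refine AddMonoidHom.ext fun z => ?_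
  show φ (mapSCh ℤ g n (mapSCh ℤ f n z)) = φ (mapSCh ℤ (g.comp f) n z)
  rw [mapSCh_comp]

/-! ### The evaluation map `Hⁿ(X;G) → Hom(Hₙ(X), G)` -/

/-- Evaluation of a cohomology class on a homology class. -/
def evalSCoho (n : ℕ) : SCoho G X n →+ (SHomo ℤ X n →+ G) := by
  refine SubQuot.lift' (cobdFrom G X n) (cobd G X n)
    (AddMonoidHom.mk' (fun φ => SubQuot.lift' (bd ℤ X n) (bdOut ℤ X n)
      (φ.1.comp (bdOut ℤ X n).ker.subtype)
      (fun a _ => by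
        have : cobd G X n φ.1 = 0 := AddMonoidHom.mem_ker.mp φ.2
        show φ.1 (bd ℤ X n a) = 0
        exact DFunLike.congr_fun this a)) ?_) ?_
  · intro φ ψ
    refine SubQuot.hom_ext fun b hb => ?_
    rfl
  · intro a ha
    refine SubQuot.hom_ext fun b hb => ?_
    show cobdFrom G X n a (b) = 0
    cases n with
    | zero => show (0 : Co G X 0) b = 0; rfl
    | succ m =>
        have hb' : bd ℤ X m b = 0 := hb
        show AddMonoidHom.comp a (bd ℤ X m) b = 0
        let a' : SCh X ℤ m →+ G := a
        exact (congrArg a' hb').trans (map_zero a')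

end Singular



/-! ## Direct systems of abelian groups and their `Hom`-inverse systems -/

structure DirSys (B : Type) [Preorder B] : Type 1 where
  obj : B → Type
  grp : ∀ b, AddCommGroup (obj b)
  map : ∀ {i j : B}, i ≤ j → (obj i →+ obj j)
  map_refl : ∀ i : B, map (le_refl i) = AddMonoidHom.id (obj i)
  map_trans : ∀ {i j k : B} (hij : i ≤ j) (hjk : j ≤ k),
    (map hjk).comp (map hij) = map (hij.trans hjk)

attribute [instance] DirSys.grp

/-- The inverse system `b ↦ Hom(A_b, G)` associated with a direct system `{A_b}`. -/
def DirSys.homSys {B : Type} [Preorder B] (D : DirSys B) (G : Type) [AddCommGroup G] :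
    InvSys B where
  obj b := D.obj b →+ G
  grp _ := inferInstance
  map {i j} h := precompHom (D.map h)
  map_refl i := by
    refine AddMonoidHom.ext fun φ => ?_
    show φ.comp (D.map (le_refl i)) = φ
    rw [D.map_refl]
    exact AddMonoidHom.comp_id φ
  map_trans {i j k} hij hjk := by
    refine AddMonoidHom.ext fun φ => ?_
    show (φ.comp (D.map hjk)).comp (D.map hij) = φ.comp (D.map (hij.trans hjk))
    rw [AddMonoidHom.comp_assoc, D.map_trans]

/-! ## Inverse systems of singular (co)homology over compact subspaces -/

/-- inclusion of subspaces as a continuous map. -/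
def inclC {X : Type} [TopologicalSpace X] {S S' : Set X} (h : S ⊆ S') : C(↥S, ↥S') :=
  ⟨Set.inclusion h, continuous_inclusion h⟩

/-- inclusion of a subspace into the ambient space. -/
def inclX {X : Type} [TopologicalSpace X] (S : Set X) : C(↥S, X) :=
  ⟨Subtype.val, continuous_subtype_val⟩

/-- The directed set of compact subspaces of `X`, ordered by inclusion. -/
abbrev CptSub (X : Type) [TopologicalSpace X] : Type := {F : Set X // IsCompact F}

noncomputable section SingularSystems

variable (G : Type) [AddCommGroup G] (X : Type) [TopologicalSpace X]

/-- The inverse system of the singular cohomology groups `Hⁿ_s(F; G)` of the compact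
subspaces of `X`. -/
def singCohCptSys (n : ℕ) : InvSys (CptSub X) where
  obj F := SCoho G ↥F.1 n
  grp _ := inferInstance
  map {F F'} h := SCohoMap G (inclC h) n
  map_refl F := by
    show SCohoMap G (inclC (subset_refl F.1)) n = _
    rw [show inclC (subset_refl F.1) = ContinuousMap.id ↥F.1 from rfl]
    exact SCohoMap_id G n
  map_trans {F F' F''} h h' := by
    show (SCohoMap G (inclC h) n).comp (SCohoMap G (inclC h') n) = _
    rw [SCohoMap_comp]
    rfl

/-- The canonical comparison map `Hⁿ_s(X;G) → lim Hⁿ_s(F;G)` over the compact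
subspaces `F ⊆ X`, given by restrictions. -/
def singToCptLim (n : ℕ) : SCoho G X n →+ (singCohCptSys G X n).lim :=
  (AddMonoidHom.pi' fun F : CptSub X => SCohoMap G (inclX F.1) n).codRestrict
    (singCohCptSys G X n).limSub (by
      intro x F F' h
      show SCohoMap G (inclC h) n (SCohoMap G (inclX F'.1) n x) = SCohoMap G (inclX F.1) n x
      rw [← AddMonoidHom.comp_apply, SCohoMap_comp]
      rfl)

/-- The direct system of the singular homology groups of the compact subspaces of `X`. -/
def singHomoCptSys (n : ℕ) : DirSys (CptSub X) where
  obj F := SHomo G ↥F.1 n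
  grp _ := inferInstance
  map {F F'} h := SHomoMap G (inclC h) n
  map_refl F := by
    show SHomoMap G (inclC (subset_refl F.1)) n = _
    rw [show inclC (subset_refl F.1) = ContinuousMap.id ↥F.1 from rfl]
    exact SHomoMap_id G _ n
  map_trans {F F' F''} h h' := by
    show (SHomoMap G (inclC h') n).comp (SHomoMap G (inclC h) n) = _
    rw [SHomoMap_comp]
    rfl

end SingularSystems


/-! ## A concrete model of `Ext(A, G)` for abelian groups -/

section Ext

variable (A B C' G : Type) [AddCommGroup A] [AddCommGroup B] [AddCommGroup C']
  [AddCommGroup G]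

/-- the canonical surjection from the free abelian group on `A` onto `A`. -/
def freeLift : FreeAbelianGroup A →+ A := FreeAbelianGroup.lift id

/-- `Ext(A, G)`, computed from the free resolution
`0 → K → ℤ[A] → A → 0` with `K = ker(ℤ[A] → A)`:
it is the cokernel of `Hom(ℤ[A], G) → Hom(K, G)`. -/
def ExtG : Type :=
  SubQuot (precompHom ((freeLift A).ker.subtype) : (FreeAbelianGroup A →+ G) →+ _)
    (0 : ((freeLift A).ker →+ G) →+ PUnit)

instance : AddCommGroup (ExtG A G) := inferInstanceAs (AddCommGroup (SubQuot _ _))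

variable {A B C'}

lemma freeLift_naturality (f : A →+ B) :
    (freeLift B).comp (FreeAbelianGroup.map f) = f.comp (freeLift A) := by
  refine FreeAbelianGroup.lift_ext _ _ fun x => ?_
  show freeLift B (FreeAbelianGroup.map f (FreeAbelianGroup.of x))
    = f (freeLift A (FreeAbelianGroup.of x))
  rw [FreeAbelianGroup.map_of_apply]
  show FreeAbelianGroup.lift id _ = f (FreeAbelianGroup.lift id _)
  rw [FreeAbelianGroup.lift_apply_of, FreeAbelianGroup.lift_apply_of]
  rfl

/-- the induced map on the kernels of the free resolutions. -/
def extKerMap (f : A →+ B) : (freeLift A).ker →+ (freeLift B).ker :=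
  ((FreeAbelianGroup.map f).comp (freeLift A).ker.subtype).codRestrict _ (fun x => by
    have h := DFunLike.congr_fun (freeLift_naturality f) x.1
    refine AddMonoidHom.mem_ker.mpr ?_
    show freeLift B (FreeAbelianGroup.map f x.1) = 0
    rw [show freeLift B (FreeAbelianGroup.map f x.1)
        = f (freeLift A x.1) from h, AddMonoidHom.mem_ker.mp x.2, map_zero])

/-- contravariant functoriality of `Ext(-, G)`. -/
def ExtG.map (f : A →+ B) : ExtG B G →+ ExtG A G :=
  SubQuot.map (precompHom (extKerMap f)) (fun _ _ => rfl)
    (fun ψ => ⟨ψ.comp (FreeAbelianGroup.map f), by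
      refine AddMonoidHom.ext fun x => ?_
      rfl⟩)

lemma ExtG.map_apply_mk (f : A →+ B) (φ : (freeLift B).ker →+ G) :
    ExtG.map G f (SubQuot.mk _ _ φ rfl) = SubQuot.mk _ _ (φ.comp (extKerMap f)) rfl := rfl

lemma ExtG.map_id :
    ExtG.map G (AddMonoidHom.id A) = AddMonoidHom.id (ExtG A G) := by
  refine SubQuot.hom_ext fun φ hφ => ?_
  show SubQuot.mk _ _ (φ.comp (extKerMap (AddMonoidHom.id A))) rfl = SubQuot.mk _ _ φ hφ
  refine SubQuot.mk_congr _ _ ?_ _ _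
  refine AddMonoidHom.ext fun x => ?_
  show φ (extKerMap (AddMonoidHom.id A) x) = φ x
  refine congrArg φ (Subtype.ext ?_)
  show FreeAbelianGroup.map _ x.1 = x.1
  rw [show ((AddMonoidHom.id A : A → A)) = _root_.id from rfl, FreeAbelianGroup.map_id_apply]

lemma ExtG.map_comp (f : A →+ B) (g : B →+ C') :
    (ExtG.map G f).comp (ExtG.map G g) = ExtG.map G (g.comp f) := by
  refine SubQuot.hom_ext fun φ hφ => ?_
  show SubQuot.mk _ _ ((φ.comp (extKerMap g)).comp (extKerMap f)) rfl
    = SubQuot.mk _ _ (φ.comp (extKerMap (g.comp f))) rfl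
  refine SubQuot.mk_congr _ _ ?_ _ _
  refine AddMonoidHom.ext fun x => ?_
  refine congrArg φ (Subtype.ext ?_)
  show FreeAbelianGroup.map g (FreeAbelianGroup.map f x.1) = FreeAbelianGroup.map (g.comp f) x.1
  rw [show ((g.comp f : A → C')) = (g : B → C') ∘ (f : A → B) from rfl,
    FreeAbelianGroup.map_comp_apply]

end Ext


/-! ## Evaluation morphism of systems and Ext systems over compact subspaces -/

noncomputable section EvalExtSys

variable (G : Type) [AddCommGroup G] (X : Type) [TopologicalSpace X]

/-- The evaluation maps `Hⁿ_s(F;G) → Hom(Hₙ_s(F), G)`, as a morphism of inverse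
systems over the compact subspaces of `X`. -/
def evalHomOver (n : ℕ) :
    HomOver (singCohCptSys G X n) ((singHomoCptSys ℤ X n).homSys G) where
  idx := OrderHom.id
  app F := evalSCoho G n
  natural {i j} h := by
    refine SubQuot.hom_ext fun φ hφ => ?_
    refine AddMonoidHom.ext fun z => ?_
    rcases SubQuot.mk_surjective _ _ z with ⟨b, hb, rfl⟩
    rfl

/-- The inverse system of the groups `Ext(Hₙ₋₁(F), G)` over the compact subspaces of `X`. -/
def extCptSys (n : ℕ) : InvSys (CptSub X) where
  obj F := ExtG (SHomo ℤ ↥F.1 n) G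
  grp _ := inferInstance
  map {F F'} h := ExtG.map G (SHomoMap ℤ (inclC h) n)
  map_refl F := by
    show ExtG.map G (SHomoMap ℤ (inclC (subset_refl F.1)) n) = _
    rw [show inclC (subset_refl F.1) = ContinuousMap.id ↥F.1 from rfl, SHomoMap_id]
    exact ExtG.map_id G
  map_trans {F F' F''} h h' := by
    show (ExtG.map G (SHomoMap ℤ (inclC h) n)).comp (ExtG.map G (SHomoMap ℤ (inclC h') n)) = _
    rw [ExtG.map_comp, SHomoMap_comp]
    rfl

end EvalExtSys


/-! ## Relative singular (co)homology of pairs -/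

noncomputable section RelativeSingular

/-- the underlying continuous map of a map of pairs. -/
def PairMap.toCM {P Q : TopPair} (f : PairMap P Q) : C(P.carrier, Q.carrier) :=
  ⟨f.toFun, f.continuous⟩

/-- the restriction of a map of pairs to the subspaces, as a continuous map. -/
def PairMap.subCM {P Q : TopPair} (f : PairMap P Q) : C(↥P.sub, ↥Q.sub) :=
  ⟨fun a => ⟨f.toFun a.1, f.maps_sub a.1 a.2⟩,
    Continuous.subtype_mk (f.continuous.comp continuous_subtype_val) _⟩

variable (G : Type) [AddCommGroup G]

/-- relative singular chains of a pair: `C_n(X;G)/C_n(A;G)`. -/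
def RSCh (P : TopPair) (n : ℕ) : Type :=
  SCh P.carrier G n ⧸ (mapSCh G (inclX P.sub) n).range

instance (P : TopPair) (n : ℕ) : AddCommGroup (RSCh G P n) :=
  inferInstanceAs (AddCommGroup (_ ⧸ _))

/-- the boundary operator on relative chains. -/
def bdRel (P : TopPair) (n : ℕ) : RSCh G P (n+1) →+ RSCh G P n :=
  QuotientAddGroup.map _ _ (bd G P.carrier n) (by
    intro x hx
    rcases hx with ⟨z, hz⟩
    refine AddSubgroup.mem_comap.mpr ⟨bd G ↥P.sub n z, ?_⟩
    show mapSCh G (inclX P.sub) n (bd G ↥P.sub n z) = bd G P.carrier n x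
    rw [mapSCh_bd, hz])

lemma bdRel_mk (P : TopPair) (n : ℕ) (z : SCh P.carrier G (n+1)) :
    bdRel G P n (QuotientAddGroup.mk z) = QuotientAddGroup.mk (bd G P.carrier n z) := rfl

/-- the relative chain map induced by a map of pairs. -/
def mapRSCh {P Q : TopPair} (f : PairMap P Q) (n : ℕ) : RSCh G P n →+ RSCh G Q n :=
  QuotientAddGroup.map _ _ (mapSCh G f.toCM n) (by
    intro x hx
    rcases hx with ⟨z, hz⟩
    refine AddSubgroup.mem_comap.mpr ⟨mapSCh G f.subCM n z, ?_⟩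
    show mapSCh G (inclX Q.sub) n (mapSCh G f.subCM n z) = mapSCh G f.toCM n x
    rw [← hz, ← mapSCh_comp, ← mapSCh_comp]
    rfl)

lemma mapRSCh_mk {P Q : TopPair} (f : PairMap P Q) (n : ℕ) (z : SCh P.carrier G n) :
    mapRSCh G f n (QuotientAddGroup.mk z) = QuotientAddGroup.mk (mapSCh G f.toCM n z) := rfl

lemma mapRSCh_bdRel {P Q : TopPair} (f : PairMap P Q) (n : ℕ) (b : RSCh G P (n+1)) :
    mapRSCh G f n (bdRel G P n b) = bdRel G Q n (mapRSCh G f (n+1) b) := by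
  refine QuotientAddGroup.induction_on b ?_
  intro z
  rw [bdRel_mk, mapRSCh_mk, mapRSCh_mk, bdRel_mk, mapSCh_bd]

lemma mapRSCh_id (P : TopPair) (n : ℕ) (b : RSCh G P n) :
    mapRSCh G (PairMap.id P) n b = b := by
  refine QuotientAddGroup.induction_on b ?_
  intro z
  rw [mapRSCh_mk]
  exact congrArg _ (mapSCh_id G P.carrier n z)

lemma mapRSCh_comp {P Q R : TopPair} (f : PairMap P Q) (g : PairMap Q R) (n : ℕ)
    (b : RSCh G P n) :
    mapRSCh G (g.comp f) n b = mapRSCh G g n (mapRSCh G f n b) := by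
  refine QuotientAddGroup.induction_on b ?_
  intro z
  rw [mapRSCh_mk, mapRSCh_mk, mapRSCh_mk]
  exact congrArg _ (mapSCh_comp G f.toCM g.toCM n z)

/-- target of the outgoing relative boundary map. -/
def RChPrev (P : TopPair) : ℕ → Type
  | 0 => PUnit
  | (n+1) => RSCh G P n

instance (P : TopPair) : ∀ n, AddCommGroup (RChPrev G P n)
  | 0 => inferInstanceAs (AddCommGroup PUnit)
  | (_+1) => inferInstanceAs (AddCommGroup (RSCh _ _ _))

def bdRelOut (P : TopPair) : ∀ n, RSCh G P n →+ RChPrev G P n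
  | 0 => 0
  | (n+1) => bdRel G P n

/-- The `n`-th relative singular homology group of a pair, with coefficients in `G`. -/
def RSHomo (P : TopPair) (n : ℕ) : Type := SubQuot (bdRel G P n) (bdRelOut G P n)

instance (P : TopPair) (n : ℕ) : AddCommGroup (RSHomo G P n) :=
  inferInstanceAs (AddCommGroup (SubQuot _ _))

lemma bdRelOut_mapRSCh {P Q : TopPair} (f : PairMap P Q) (n : ℕ) (b : RSCh G P n)
    (hb : bdRelOut G P n b = 0) : bdRelOut G Q n (mapRSCh G f n b) = 0 := by
  cases n with
  | zero => rfl
  | succ m =>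
      show bdRel G Q m (mapRSCh G f (m+1) b) = 0
      rw [← mapRSCh_bdRel, show bdRel G P m b = 0 from hb, map_zero]

/-- The map on relative singular homology induced by a map of pairs. -/
def RSHomoMap {P Q : TopPair} (f : PairMap P Q) (n : ℕ) : RSHomo G P n →+ RSHomo G Q n :=
  SubQuot.map (mapRSCh G f n) (bdRelOut_mapRSCh G f n)
    (fun a => ⟨mapRSCh G f (n+1) a, (mapRSCh_bdRel G f n a).symm⟩)

/-- relative singular cochains. -/
abbrev RCo (P : TopPair) (n : ℕ) : Type := RSCh ℤ P n →+ G

/-- the relative coboundary. -/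
def cobdRel (P : TopPair) (n : ℕ) : RCo G P n →+ RCo G P (n+1) := precompHom (bdRel ℤ P n)

def RCoPrev (P : TopPair) : ℕ → Type
  | 0 => PUnit
  | (n+1) => RCo G P n

instance (P : TopPair) : ∀ n, AddCommGroup (RCoPrev G P n)
  | 0 => inferInstanceAs (AddCommGroup PUnit)
  | (_+1) => inferInstanceAs (AddCommGroup (RCo _ _ _))

def cobdRelFrom (P : TopPair) : ∀ n, RCoPrev G P n →+ RCo G P n
  | 0 => 0
  | (n+1) => cobdRel G P n

/-- The `n`-th relative singular cohomology group of a pair, with coefficients in `G`. -/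
def RSCoho (P : TopPair) (n : ℕ) : Type := SubQuot (cobdRelFrom G P n) (cobdRel G P n)

instance (P : TopPair) (n : ℕ) : AddCommGroup (RSCoho G P n) :=
  inferInstanceAs (AddCommGroup (SubQuot _ _))

lemma cobdRel_precomp {P Q : TopPair} (f : PairMap P Q) (n : ℕ) (φ : RCo G Q n)
    (hφ : cobdRel G Q n φ = 0) :
    cobdRel G P n (φ.comp (mapRSCh ℤ f n)) = 0 := by
  refine AddMonoidHom.ext fun z => ?_
  show φ (mapRSCh ℤ f n (bdRel ℤ P n z)) = 0
  rw [mapRSCh_bdRel]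
  exact DFunLike.congr_fun hφ (mapRSCh ℤ f (n+1) z)

lemma cobdRelFrom_precomp {P Q : TopPair} (f : PairMap P Q) (n : ℕ) (a : RCoPrev G Q n) :
    ∃ a' : RCoPrev G P n,
      cobdRelFrom G P n a' = precompHom (mapRSCh ℤ f n) (cobdRelFrom G Q n a) := by
  cases n with
  | zero =>
      exact ⟨PUnit.unit, by
        show (0 : RCo G P 0) = _
        rw [show cobdRelFrom G Q 0 a = 0 from rfl, map_zero]⟩
  | succ m =>
      refine ⟨precompHom (mapRSCh ℤ f m) a, ?_⟩
      refine AddMonoidHom.ext fun z => ?_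
      show (AddMonoidHom.comp a (mapRSCh ℤ f m)) (bdRel ℤ P m z)
        = (AddMonoidHom.comp a (bdRel ℤ Q m)) (mapRSCh ℤ f (m+1) z)
      let a' : RSCh ℤ Q m →+ G := a
      exact congrArg a' (mapRSCh_bdRel ℤ f m z)

/-- The map on relative singular cohomology induced by a map of pairs. -/
def RSCohoMap {P Q : TopPair} (f : PairMap P Q) (n : ℕ) : RSCoho G Q n →+ RSCoho G P n :=
  SubQuot.map (precompHom (mapRSCh ℤ f n)) (fun φ hφ => cobdRel_precomp G f n φ hφ)
    (cobdRelFrom_precomp G f n)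

end RelativeSingular

/-! ## ℤ-indexed singular (co)homology (trivial in negative degrees) -/

noncomputable section ZIndexed

variable (G : Type) [AddCommGroup G]

/-- absolute integral singular homology, indexed by `ℤ`. -/
def SHomoZ (n : ℤ) (X : Type) [TopologicalSpace X] : Type :=
  match n with
  | .ofNat k => SHomo ℤ X k
  | .negSucc _ => PUnit

instance (n : ℤ) (X : Type) [TopologicalSpace X] : AddCommGroup (SHomoZ n X) :=
  match n with
  | .ofNat _ => inferInstanceAs (AddCommGroup (SHomo _ _ _))
  | .negSucc _ => inferInstanceAs (AddCommGroup PUnit)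

/-- the map on `ℤ`-indexed integral singular homology induced by a continuous map. -/
def SHomoZMap (n : ℤ) {X Y : Type} [TopologicalSpace X] [TopologicalSpace Y]
    (f : C(X,Y)) : SHomoZ n X →+ SHomoZ n Y :=
  match n with
  | .ofNat k => SHomoMap ℤ f k
  | .negSucc _ => 0

/-- relative singular cohomology with coefficients in `G`, indexed by `ℤ`. -/
def RSCohoZ (n : ℤ) (P : TopPair) : Type :=
  match n with
  | .ofNat k => RSCoho G P k
  | .negSucc _ => PUnit

instance (n : ℤ) (P : TopPair) : AddCommGroup (RSCohoZ G n P) :=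
  match n with
  | .ofNat _ => inferInstanceAs (AddCommGroup (RSCoho _ _ _))
  | .negSucc _ => inferInstanceAs (AddCommGroup PUnit)

/-- the induced map on `ℤ`-indexed relative singular cohomology. -/
def RSCohoZMap (n : ℤ) {P Q : TopPair} (f : PairMap P Q) :
    RSCohoZ G n Q →+ RSCohoZ G n P :=
  match n with
  | .ofNat k => RSCohoMap G f k
  | .negSucc _ => 0

/-- relative singular homology with coefficients in `G`, indexed by `ℤ`. -/
def RSHomoZ (n : ℤ) (P : TopPair) : Type :=
  match n with
  | .ofNat k => RSHomo G P k
  | .negSucc _ => PUnit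

instance (n : ℤ) (P : TopPair) : AddCommGroup (RSHomoZ G n P) :=
  match n with
  | .ofNat _ => inferInstanceAs (AddCommGroup (RSHomo _ _ _))
  | .negSucc _ => inferInstanceAs (AddCommGroup PUnit)

/-- the induced map on `ℤ`-indexed relative singular homology. -/
def RSHomoZMap (n : ℤ) {P Q : TopPair} (f : PairMap P Q) :
    RSHomoZ G n P →+ RSHomoZ G n Q :=
  match n with
  | .ofNat k => RSHomoMap G f k
  | .negSucc _ => 0

end ZIndexed


/-! ## The universal coefficients formula axiom (UCF) -/

/-- A continuous map as a map of the associated pairs (with empty subspaces). -/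
def PairMap.ofCM {X Y : Type} [TopologicalSpace X] [TopologicalSpace Y] (f : C(X,Y)) :
    PairMap (TopPair.ofSpace X) (TopPair.ofSpace Y) :=
  ⟨f, f.continuous, fun x hx => absurd hx (Set.notMem_empty x)⟩

/-- Universal coefficients formula data for a cohomological sequence `T` with
coefficient group `G` on the subcategory `Obj`: functorial exact sequences
`0 → Ext(Hˢₙ₋₁(X), G) → Hⁿ(X;G) → Hom(Hˢₙ(X), G) → 0`. -/
structure UCFData (T : CohSeq) (G : Type) [AddCommGroup G] (Obj : TopPair → Prop) :
    Type 1 where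
  extHom : ∀ (n : ℤ) (X : Type) [TopologicalSpace X],
    ExtG (SHomoZ (n-1) X) G →+ T.H n (TopPair.ofSpace X)
  homHom : ∀ (n : ℤ) (X : Type) [TopologicalSpace X],
    T.H n (TopPair.ofSpace X) →+ (SHomoZ n X →+ G)
  injective : ∀ (n : ℤ) (X : Type) [TopologicalSpace X], Obj (TopPair.ofSpace X) →
    Function.Injective (extHom n X)
  exact : ∀ (n : ℤ) (X : Type) [TopologicalSpace X], Obj (TopPair.ofSpace X) →
    (extHom n X).range = (homHom n X).ker
  surjective : ∀ (n : ℤ) (X : Type) [TopologicalSpace X], Obj (TopPair.ofSpace X) →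
    Function.Surjective (homHom n X)
  natural_ext : ∀ (n : ℤ) {X Y : Type} [TopologicalSpace X] [TopologicalSpace Y],
    Obj (TopPair.ofSpace X) → Obj (TopPair.ofSpace Y) → ∀ (g : C(X,Y)),
    (extHom n X).comp (ExtG.map G (SHomoZMap (n-1) g))
      = (T.map n (PairMap.ofCM g)).comp (extHom n Y)
  natural_hom : ∀ (n : ℤ) {X Y : Type} [TopologicalSpace X] [TopologicalSpace Y],
    Obj (TopPair.ofSpace X) → Obj (TopPair.ofSpace Y) → ∀ (g : C(X,Y)),
    (homHom n X).comp (T.map n (PairMap.ofCM g))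
      = (precompHom (SHomoZMap n g)).comp (homHom n Y)

/-! ## Cohomology bifunctors (varying coefficients) -/

/-- A cohomological sequence which is also functorial in the coefficient group
(a bifunctor), with connecting homomorphisms `δ`. -/
structure CohBi : Type 1 where
  H : ∀ (n : ℤ) (P : TopPair) (G : Type) [AddCommGroup G], Type
  grp : ∀ (n : ℤ) (P : TopPair) (G : Type) [AddCommGroup G], AddCommGroup (H n P G)
  map : ∀ (n : ℤ) {P Q : TopPair} (f : PairMap P Q) (G : Type) [AddCommGroup G],
    H n Q G →+ H n P G
  map_id : ∀ (n : ℤ) (P : TopPair) (G : Type) [AddCommGroup G],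
    map n (PairMap.id P) G = AddMonoidHom.id (H n P G)
  map_comp : ∀ (n : ℤ) {P Q R : TopPair} (f : PairMap P Q) (g : PairMap Q R)
    (G : Type) [AddCommGroup G], map n (g.comp f) G = (map n f G).comp (map n g G)
  cmap : ∀ (n : ℤ) (P : TopPair) {G G' : Type} [AddCommGroup G] [AddCommGroup G']
    (φ : G →+ G'), H n P G →+ H n P G'
  cmap_id : ∀ (n : ℤ) (P : TopPair) (G : Type) [AddCommGroup G],
    cmap n P (AddMonoidHom.id G) = AddMonoidHom.id (H n P G)
  cmap_comp : ∀ (n : ℤ) (P : TopPair) {G G' G'' : Type} [AddCommGroup G]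
    [AddCommGroup G'] [AddCommGroup G''] (φ : G →+ G') (ψ : G' →+ G''),
    (cmap n P ψ).comp (cmap n P φ) = cmap n P (ψ.comp φ)
  cmap_map : ∀ (n : ℤ) {P Q : TopPair} (f : PairMap P Q) {G G' : Type}
    [AddCommGroup G] [AddCommGroup G'] (φ : G →+ G'),
    (cmap n P φ).comp (map n f G) = (map n f G').comp (cmap n Q φ)
  δ : ∀ (n : ℤ) (P : TopPair) (G : Type) [AddCommGroup G],
    H n P.subPair G →+ H (n+1) P G
  δ_natural : ∀ (n : ℤ) {P Q : TopPair} (f : PairMap P Q) (G : Type) [AddCommGroup G],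
    (δ n P G).comp (map n f.restrictSub G) = (map (n+1) f G).comp (δ n Q G)

attribute [instance] CohBi.grp

namespace CohBi

/-- the cohomology theory at a fixed coefficient group. -/
def at_ (T : CohBi) (G : Type) [AddCommGroup G] : CohTheory where
  H n P := T.H n P G
  grp n P := T.grp n P G
  map n {P Q} f := T.map n f G
  map_id n P := T.map_id n P G
  map_comp n {P Q R} f g := T.map_comp n f g G
  δ n P := T.δ n P G
  δ_natural n {P Q} f := T.δ_natural n f G

/-- A short exact sequence of abelian groups. -/
def ShortExact {G G' G'' : Type} [AddCommGroup G] [AddCommGroup G'] [AddCommGroup G'']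
    (φ : G →+ G') (ψ : G' →+ G'') : Prop :=
  Function.Injective φ ∧ φ.range = ψ.ker ∧ Function.Surjective ψ

/-- EFSA: the bifunctor is an exact functor of the second (coefficient) argument:
every short exact sequence of coefficient groups induces a functorial long exact
sequence of cohomology groups. -/
def EFSA (T : CohBi) (Obj : TopPair → Prop) : Prop :=
  ∀ {G G' G'' : Type} [AddCommGroup G] [AddCommGroup G'] [AddCommGroup G'']
    (φ : G →+ G') (ψ : G' →+ G''), ShortExact φ ψ →
    ∃ β : ∀ (n : ℤ) (P : TopPair), T.H n P G'' →+ T.H (n+1) P G,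
      (∀ (P : TopPair), Obj P → ∀ n : ℤ,
        ((T.cmap n P φ).range = (T.cmap n P ψ).ker) ∧
        ((T.cmap n P ψ).range = (β n P).ker) ∧
        ((β n P).range = (T.cmap (n+1) P φ).ker)) ∧
      (∀ {P Q : TopPair}, Obj P → Obj Q → ∀ (f : PairMap P Q) (n : ℤ),
        (β n P).comp (T.map n f G'') = (T.map (n+1) f G).comp (β n Q))

/-- CSI: compact supports for injective coefficient groups: for every injective
abelian group `G` and every space `X` of the category, the canonical map
`Hⁿ(X;G) → lim Hⁿ(F;G)` over the compact subspaces of `X` is an isomorphism. -/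
def CSI (T : CohBi) (Obj : TopPair → Prop) : Prop :=
  ∀ (G : Type) [AddCommGroup G], CategoryTheory.Injective (AddCommGrpCat.of G) →
    ∀ (X : Type) [TopologicalSpace X], Obj (TopPair.ofSpace X) →
    ∀ n : ℤ, Function.Bijective ((T.at_ G).toCohSeq.toCptLim n (TopPair.ofSpace X))

end CohBi

/-- the one-point pair. -/
def ptPair : TopPair := TopPair.ofSpace PUnit


/-! ## The four axiomatic systems ("senses") for cohomology theories on `K²_CW` -/

/-- A cohomology theory in the Milnor sense on `K²_CW`: an Eilenberg–Steenrod
cohomology theory satisfying the additivity axiom. -/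
def CohTheory.IsMilnorSense (T : CohTheory) : Prop :=
  T.IsES IsCWPair ∧ T.AdditivityAxiom IsCWPair

/-- A cohomology theory in the Mdzinarishvili sense on `K²_CW`: a nontrivial internal
extension of an Eilenberg–Steenrod cohomology theory on compact polyhedral pairs, i.e.
(1_NT) restriction to `K²_PolC` is an ES theory, (2_NT)+(3_NT) natural short exact
sequences `0 → lim¹ Hⁿ⁻¹(F_α,E_α) → Hⁿ(X,A) → lim Hⁿ(F_α,E_α) → 0`, and (4_NT) the
exactness axiom on `K²_CW`. -/
def CohTheory.IsMdzSense (T : CohTheory) : Prop :=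
  T.IsES IsCompactPolyhedralPair ∧ T.ExactnessAxiom IsCWPair ∧
  ∃ E : NTSes T.toCohSeq IsCWPair, E.Natural

/-- A cohomology theory in the Berikashvili–Mdzinarishvili–Beridze sense on `K²_CW`:
an extension of an ES theory on compact polyhedral pairs satisfying the exactness
axiom and the universal coefficients formula on `K²_CW`. -/
def CohTheory.IsBMBSense (T : CohTheory) (G : Type) [AddCommGroup G] : Prop :=
  T.IsES IsCompactPolyhedralPair ∧ T.ExactnessAxiom IsCWPair ∧
  Nonempty (UCFData T.toCohSeq G IsCWPair)

/-- A cohomology theory in the Inasaridze–Mdzinarishvili–Beridze sense on `K²_CW`: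
an extension of an ES theory on compact polyhedral pairs which is an exact functor
of the second argument and has compact supports for injective coefficient groups. -/
def CohBi.IsIMBSense (T : CohBi) : Prop :=
  (∀ (G : Type) [AddCommGroup G], (T.at_ G).IsES IsCompactPolyhedralPair) ∧
  T.EFSA IsCWPair ∧ T.CSI IsCWPair


/-- The inverse system of the singular cohomology groups `Hⁿ_s(V ∩ F_β; G)` over the
compact subspaces `F_β` of `X`, for a fixed subset `V ⊆ X`. -/
noncomputable def subCptSys (X : Type) [TopologicalSpace X] (G : Type) [AddCommGroup G]
    (n : ℕ) (V : Set X) : InvSys (CptSub X) where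
  obj F := SCoho G ↥(V ∩ F.1 : Set X) n
  grp _ := inferInstance
  map {F F'} h := SCohoMap G (inclC (Set.inter_subset_inter_right V h)) n
  map_refl F := by
    show SCohoMap G (inclC (Set.inter_subset_inter_right V (subset_refl F.1))) n = _
    rw [show inclC (Set.inter_subset_inter_right V (subset_refl F.1))
        = ContinuousMap.id ↥(V ∩ F.1 : Set X) from rfl]
    exact SCohoMap_id G n
  map_trans {F F' F''} h h' := by
    show (SCohoMap G (inclC (Set.inter_subset_inter_right V h)) n).comp
      (SCohoMap G (inclC (Set.inter_subset_inter_right V h')) n) = _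
    rw [SCohoMap_comp]
    rfl

/-- The restriction morphism of inverse systems `{Hⁿ_s(F_β;G)} → {Hⁿ_s(V ∩ F_β;G)}`. -/
noncomputable def restrHomOver (X : Type) [TopologicalSpace X] (G : Type)
    [AddCommGroup G] (n : ℕ) (V : Set X) :
    HomOver (singCohCptSys G X n) (subCptSys X G n V) where
  idx := OrderHom.id
  app F := SCohoMap G (inclC (Set.inter_subset_right : V ∩ F.1 ⊆ F.1)) n
  natural {i j} h := by
    show (SCohoMap G (inclC Set.inter_subset_right) n).comp (SCohoMap G (inclC h) n)
      = (SCohoMap G (inclC (Set.inter_subset_inter_right V h)) n).comp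
          (SCohoMap G (inclC Set.inter_subset_right) n)
    rw [SCohoMap_comp, SCohoMap_comp]
    rfl

/-!
A singular simplex has connected image, so in a disjoint union of open pieces it lies in exactly
one piece. Hence the singular cochains of such a space are the product of the cochains of the
pieces, compatibly with coboundaries, and since subquotients commute with products so does
singular cohomology. For a compact `F` this applies to the pieces `U α ∩ F`, so the restriction
morphism of inverse systems is, index by index, an isomorphism onto the product of the systems
`{Hⁿ(U α ∩ F_β)}`. The Roos complex computing `lim` and `lim¹` is built degreewise from products
of the groups of the system, so it too commutes with products.
-/

lemma SubQuot.mk_eq_zero_iff {A B C : Type} [AddCommGroup A] [AddCommGroup B] [AddCommGroup C]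
    (f : A →+ B) (g : B →+ C) (b : B) (hb : g b = 0) :
    SubQuot.mk f g b hb = 0 ↔ ∃ a, f a = b := by
  refine (QuotientAddGroup.eq_zero_iff (N := f.range.addSubgroupOf g.ker)
    (⟨b, AddMonoidHom.mem_ker.mpr hb⟩ : g.ker)).trans ?_
  rw [AddSubgroup.mem_addSubgroupOf]
  exact AddMonoidHom.mem_range

lemma SubQuot.map_pi_bijective {ι A B C : Type} {A' B' C' : ι → Type}
    [AddCommGroup A] [AddCommGroup B] [AddCommGroup C]
    [∀ i, AddCommGroup (A' i)] [∀ i, AddCommGroup (B' i)] [∀ i, AddCommGroup (C' i)]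
    {f : A →+ B} {g : B →+ C} {f' : ∀ i, A' i →+ B' i} {g' : ∀ i, B' i →+ C' i}
    (a : ∀ i, A →+ A' i) (b : ∀ i, B →+ B' i) (c : ∀ i, C →+ C' i)
    (hfa : ∀ i x, f' i (a i x) = b i (f x)) (hgb : ∀ i y, g' i (b i y) = c i (g y))
    (ha : Surjective fun x i => a i x) (hb : Bijective fun y i => b i y)
    (hc : Injective fun z i => c i z)
    (hker : ∀ i y, g y = 0 → g' i (b i y) = 0) (hrange : ∀ i x, ∃ x', f' i x' = b i (f x)) :
    Bijective fun (q : SubQuot f g) i => SubQuot.map (b i) (hker i) (hrange i) q := by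
  constructor
  · show Injective (AddMonoidHom.pi' fun i => SubQuot.map (b i) (hker i) (hrange i))
    rw [injective_iff_map_eq_zero]
    intro q hq
    obtain ⟨y, hy, rfl⟩ := SubQuot.mk_surjective f g q
    choose x' hx' using fun i => (SubQuot.mk_eq_zero_iff _ _ _ _).mp (congrFun hq i)
    obtain ⟨x, rfl⟩ := ha x'
    refine (SubQuot.mk_eq_zero_iff _ _ _ _).mpr ⟨x, hb.1 (funext fun i => ?_)⟩
    exact (hfa i x).symm.trans (hx' i)
  · intro q'
    choose y' hy' hq' using fun i => SubQuot.mk_surjective _ _ (q' i)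
    obtain ⟨y, hy⟩ := hb.2 y'
    have hy (i : ι) : b i y = y' i := congrFun hy i
    have hcycle : g y = 0 := hc <| funext fun i => show c i (g y) = c i 0 by
      rw [map_zero, ← hgb, hy, hy']
    exact ⟨SubQuot.mk f g y hcycle, funext fun i => (SubQuot.mk_congr _ _ (hy i) _ _).trans (hq' i)⟩

namespace HomOver

theorem limDMap_pi_bijective {ι B₁ B₂ : Type} [Preorder B₁] [Preorder B₂] {T : InvSys B₂}
    {S : ι → InvSys B₁} (φ : ∀ i, HomOver T (S i))
    (hC : ∀ k, Bijective fun (u : T.C k) i => (φ i).Cmap k u) (k : ℕ) :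
    Bijective fun (x : T.limD k) i => (φ i).limDMap k x :=
  SubQuot.map_pi_bijective (fun i => (φ i).Cmap k) (fun i => (φ i).Cmap (k+1))
    (fun i => (φ i).Cmap (k+2))
    (fun i x => funext fun c => ((φ i).Cmap_d_apply k x c).symm)
    (fun i y => funext fun c => ((φ i).Cmap_d_apply (k+1) y c).symm)
    (hC k).2 (hC (k+1)) (hC (k+2)).1 _ _

def ofApp {B : Type} [Preorder B] {T S : InvSys B} (app : ∀ b, T.obj b →+ S.obj b)
    (natural : ∀ {i j : B} (h : i ≤ j), (app i).comp (T.map h) = (S.map h).comp (app j)) :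
    HomOver T S :=
  ⟨OrderHom.id, app, natural⟩

section ofApp

variable {ι B : Type} [Preorder B] {T : InvSys B} {S : ι → InvSys B}
  (app : ∀ i b, T.obj b →+ (S i).obj b)
  (natural : ∀ i {b b' : B} (h : b ≤ b'),
    (app i b).comp (T.map h) = ((S i).map h).comp (app i b'))
  (hbij : ∀ b, Bijective fun (x : T.obj b) i => app i b x)
include hbij

theorem ofApp_Cmap_pi_bijective (k : ℕ) :
    Bijective fun (u : T.C k) i => (ofApp (app i) (natural i)).Cmap k u :=
  (Equiv.piComm _).bijective.comp (Bijective.piMap fun c : Chain B k => hbij (c 0))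

theorem ofApp_limMap_pi_bijective :
    Bijective fun (x : T.lim) i => (ofApp (app i) (natural i)).limMap x := by
  constructor
  · intro x y h
    exact Subtype.ext <| funext fun b =>
      (hbij b).1 <| funext fun i => congrArg (fun z => (z i).1 b) h
  · intro y
    choose x hx using fun b => (hbij b).2 fun i => (y i).1 b
    have hx (i : ι) (b : B) : app i b (x b) = (y i).1 b := congrFun (hx b) i
    have hmem : x ∈ T.limSub := fun b b' h => (hbij b).1 <| funext fun i => by
      show app i b (T.map h (x b')) = app i b (x b)
      rw [← AddMonoidHom.comp_apply, natural, AddMonoidHom.comp_apply, hx, hx]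
      exact (y i).2 b b' h
    exact ⟨⟨x, hmem⟩, funext fun i => Subtype.ext <| funext fun b => hx i b⟩

end ofApp

end HomOver

theorem AddMonoidHom.comp_mapDomain_pi_bijective {κ T M N : Type} {S : κ → Type}
    [AddCommMonoid M] [AddCommMonoid N] (j : ∀ i, S i → T)
    (hj : Bijective fun p : Σ i, S i => j p.1 p.2) :
    Bijective fun (φ : (T →₀ M) →+ N) i => φ.comp (Finsupp.mapDomain.addMonoidHom (j i)) := by
  have hreindex : Bijective fun (F : T → M →+ N) i s => F (j i s) :=
    (Equiv.piCurry fun _ _ => M →+ N).bijective.comp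
      ((Equiv.ofBijective _ hj).arrowCongr (Equiv.refl _)).symm.bijective
  have hfactor : (fun (φ : (T →₀ M) →+ N) i => φ.comp (Finsupp.mapDomain.addMonoidHom (j i))) =
      Pi.map (fun _ => Finsupp.liftAddHom) ∘ (fun F i s => F (j i s)) ∘
        Finsupp.liftAddHom.symm := by
    funext φ i
    refine Finsupp.addHom_ext fun s m => ?_
    simp
  rw [hfactor]
  exact (Bijective.piMap fun _ => Finsupp.liftAddHom.bijective).comp
    (hreindex.comp Finsupp.liftAddHom.symm.bijective)

theorem isClopen_of_disjoint_open_cover {Y ι : Type} [TopologicalSpace Y] {V : ι → Set Y}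
    (hopen : ∀ i, IsOpen (V i)) (hdisj : Pairwise (Function.onFun Disjoint V))
    (hcov : (⋃ i, V i) = Set.univ) (i : ι) : IsClopen (V i) := by
  have hcompl : (V i)ᶜ = ⋃ (j) (_ : j ≠ i), V j := by
    ext y
    simp only [Set.mem_compl_iff, Set.mem_iUnion]
    constructor
    · intro hy
      obtain ⟨j, hj⟩ := Set.mem_iUnion.1 (hcov ▸ Set.mem_univ y)
      exact ⟨j, fun h => hy (h ▸ hj), hj⟩
    · rintro ⟨j, hji, hj⟩ hi
      exact Set.disjoint_left.1 (hdisj hji) hj hi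
  refine ⟨?_, hopen i⟩
  rw [← isOpen_compl_iff, hcompl]
  exact isOpen_biUnion fun j _ => hopen j

noncomputable section SingularDecomposition

def Simp.toC {X : Type} [TopologicalSpace X] {n : ℕ} (σ : Simp X n) :
    C(SimplexCategory.toTop.obj (SimplexCategory.mk n), X) :=
  σ.down.hom

def Simp.ofC {X : Type} [TopologicalSpace X] {n : ℕ}
    (σ : C(SimplexCategory.toTop.obj (SimplexCategory.mk n), X)) : Simp X n :=
  ⟨TopCat.ofHom σ⟩

theorem Simp.toC_injective {X : Type} [TopologicalSpace X] {n : ℕ} :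
    Injective (Simp.toC (X := X) (n := n)) :=
  fun _ _ h => ULift.ext _ _ (TopCat.hom_ext h)

variable {Y ι : Type} [TopologicalSpace Y] {V : ι → Set Y}

theorem mapSimp_inclX_sigma_bijective (hopen : ∀ i, IsOpen (V i))
    (hdisj : Pairwise (Function.onFun Disjoint V)) (hcov : (⋃ i, V i) = Set.univ) (n : ℕ) :
    Bijective fun p : Σ i, Simp (V i) n => mapSimp (inclX (V p.1)) n p.2 := by
  obtain ⟨t₀⟩ : Nonempty (SimplexCategory.toTop.obj (SimplexCategory.mk n)) := inferInstance
  constructor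
  · rintro ⟨i, τ⟩ ⟨i', τ'⟩ h
    have hval (t) : (τ.toC t).1 = (τ'.toC t).1 :=
      congrArg (fun σ : Simp Y n => σ.toC t) h
    obtain rfl : i = i' := by
      by_contra hne
      exact Set.disjoint_left.1 (hdisj hne) (τ.toC t₀).2 (hval t₀ ▸ (τ'.toC t₀).2)
    obtain rfl : τ = τ' :=
      Simp.toC_injective (ContinuousMap.ext fun t => Subtype.ext (hval t))
    rfl
  · intro σ
    obtain ⟨i, hi⟩ := Set.mem_iUnion.1 (hcov ▸ Set.mem_univ (σ.toC t₀))
    have hrange : Set.range σ.toC ⊆ V i :=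
      (isPreconnected_range σ.toC.continuous).subset_isClopen
        (isClopen_of_disjoint_open_cover hopen hdisj hcov i) ⟨_, ⟨t₀, rfl⟩, hi⟩
    exact ⟨⟨i, Simp.ofC ⟨fun t => ⟨σ.toC t, hrange ⟨t, rfl⟩⟩, by fun_prop⟩⟩,
      Simp.toC_injective rfl⟩

variable (G : Type) [AddCommGroup G]

theorem comp_mapSCh_inclX_pi_bijective (hopen : ∀ i, IsOpen (V i))
    (hdisj : Pairwise (Function.onFun Disjoint V)) (hcov : (⋃ i, V i) = Set.univ) (n : ℕ) :
    Bijective fun (φ : Co G Y n) i => φ.comp (mapSCh ℤ (inclX (V i)) n) :=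
  AddMonoidHom.comp_mapDomain_pi_bijective _ (mapSimp_inclX_sigma_bijective hopen hdisj hcov n)

def precompPrev {X Z : Type} [TopologicalSpace X] [TopologicalSpace Z] (f : C(X, Z)) :
    ∀ n, CoPrev G Z n →+ CoPrev G X n
  | 0 => 0
  | m+1 => precompHom (mapSCh ℤ f m)

theorem cobdFrom_precompPrev {X Z : Type} [TopologicalSpace X] [TopologicalSpace Z]
    (f : C(X, Z)) : ∀ n (a : CoPrev G Z n),
      cobdFrom G X n (precompPrev G f n a) = precompHom (mapSCh ℤ f n) (cobdFrom G Z n a)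
  | 0, _ => rfl
  | m+1, a => cobd_precomp G f m a

theorem SCohoMap_inclX_pi_bijective (hopen : ∀ i, IsOpen (V i))
    (hdisj : Pairwise (Function.onFun Disjoint V)) (hcov : (⋃ i, V i) = Set.univ) (n : ℕ) :
    Bijective fun (x : SCoho G Y n) i => SCohoMap G (inclX (V i)) n x := by
  have hprev : Surjective fun a i => precompPrev G (inclX (V i)) n a := by
    cases n with
    | zero => exact fun _ => ⟨PUnit.unit, rfl⟩
    | succ m => exact (comp_mapSCh_inclX_pi_bijective G hopen hdisj hcov m).2
  exact SubQuot.map_pi_bijective (fun i => precompPrev G (inclX (V i)) n)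
    (fun i => precompHom (mapSCh ℤ (inclX (V i)) n))
    (fun i => precompHom (mapSCh ℤ (inclX (V i)) (n+1)))
    (fun i => cobdFrom_precompPrev G _ n) (fun i => cobd_precomp G _ n) hprev
    (comp_mapSCh_inclX_pi_bijective G hopen hdisj hcov n)
    (comp_mapSCh_inclX_pi_bijective G hopen hdisj hcov (n+1)).1 _ _

end SingularDecomposition

section CompactPieces

variable {X : Type} [TopologicalSpace X]

def interHomeomorphPreimageVal (U F : Set X) : ↥(U ∩ F) ≃ₜ ↥(Subtype.val ⁻¹' U : Set F) where
  toFun x := ⟨⟨x.1, x.2.2⟩, x.2.1⟩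
  invFun y := ⟨y.1.1, y.2, y.1.2⟩
  left_inv _ := rfl
  right_inv _ := rfl
  continuous_toFun := by fun_prop
  continuous_invFun := by fun_prop

variable (G : Type) [AddCommGroup G]

theorem SCohoMap_bijective_of_homeomorph {Z : Type} [TopologicalSpace Z] (e : X ≃ₜ Z) (n : ℕ) :
    Bijective (SCohoMap G (e : C(X, Z)) n) := by
  refine bijective_iff_has_inverse.2 ⟨SCohoMap G (e.symm : C(Z, X)) n, fun x => ?_, fun y => ?_⟩
  · rw [← AddMonoidHom.comp_apply, SCohoMap_comp, show (e : C(X, Z)).comp e.symm = .id Z from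
      ContinuousMap.ext e.apply_symm_apply, SCohoMap_id, AddMonoidHom.id_apply]
  · rw [← AddMonoidHom.comp_apply, SCohoMap_comp, show (e.symm : C(Z, X)).comp e = .id X from
      ContinuousMap.ext e.symm_apply_apply, SCohoMap_id, AddMonoidHom.id_apply]

theorem SCohoMap_inter_pi_bijective {ι : Type} {U : ι → Set X} (hopen : ∀ i, IsOpen (U i))
    (hdisj : Pairwise (Function.onFun Disjoint U)) (hcov : (⋃ i, U i) = Set.univ)
    (F : Set X) (n : ℕ) :
    Bijective fun (x : SCoho G F n) i =>
      SCohoMap G (inclC (Set.inter_subset_right : U i ∩ F ⊆ F)) n x := by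
  have hsplit := SCohoMap_inclX_pi_bijective G (V := fun i => (Subtype.val ⁻¹' U i : Set F))
    (fun i => (hopen i).preimage continuous_subtype_val)
    (fun i j hij => (hdisj hij).preimage _)
    (by rw [← Set.preimage_iUnion, hcov, Set.preimage_univ]) n
  have hfactor (i : ι) : inclC (Set.inter_subset_right : U i ∩ F ⊆ F) =
      (inclX (Subtype.val ⁻¹' U i : Set F)).comp (interHomeomorphPreimageVal (U i) F) := rfl
  simp_rw [hfactor, ← SCohoMap_comp, AddMonoidHom.comp_apply]
  exact (Bijective.piMap fun i =>
    SCohoMap_bijective_of_homeomorph G (interHomeomorphPreimageVal (U i) F) n).comp hsplit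

end CompactPieces

theorem lim_and_lim1_of_disjoint_union_general (X : Type) [TopologicalSpace X]
    (G : Type) [AddCommGroup G]
    {ι : Type} (U : ι → Set X) (hopen : ∀ α, IsOpen (U α))
    (hdisj : Pairwise (Function.onFun Disjoint U)) (hcover : (⋃ α, U α) = Set.univ)
    (n : ℕ) :
    Function.Bijective (fun (x : (singCohCptSys G X n).lim) (α : ι) =>
      (restrHomOver X G n (U α)).limMap x) ∧
    Function.Bijective (fun (x : (singCohCptSys G X n).lim1) (α : ι) =>
      (restrHomOver X G n (U α)).limDMap 0 x) := by
  have hpointwise (F : CptSub X) : Bijective fun x α =>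
      (restrHomOver X G n (U α)).app F x :=
    SCohoMap_inter_pi_bijective G hopen hdisj hcover F.1 n
  -- `restrHomOver` reindexes by the identity, so it is definitionally `HomOver.ofApp` of its
  -- components.
  exact ⟨HomOver.ofApp_limMap_pi_bijective _ (fun α => (restrHomOver X G n (U α)).natural)
      hpointwise,
    HomOver.limDMap_pi_bijective _
      (HomOver.ofApp_Cmap_pi_bijective _ (fun α => (restrHomOver X G n (U α)).natural)
        hpointwise) 0⟩

/-- **Statement 14.** Let `X` (of the homotopy type of a CW complex) be the disjoint union
of open subspaces `X_α`, let `{F_β}` be the direct system of compact subspaces of `X` and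
`F_{α,β} = X_α ∩ F_β`.  Then the natural homomorphisms induced by the inclusions give
isomorphisms `lim Hⁿ_s(F_β;G) ≅ ∏_α lim Hⁿ_s(F_{α,β};G)` and
`lim¹ Hⁿ_s(F_β;G) ≅ ∏_α lim¹ Hⁿ_s(F_{α,β};G)`. -/
theorem lim_and_lim1_of_disjoint_union (X : Type) [TopologicalSpace X]
    (hX : HasCWHomotopyType X) (G : Type) [AddCommGroup G]
    {ι : Type} (U : ι → Set X) (hopen : ∀ α, IsOpen (U α))
    (hdisj : Pairwise (Function.onFun Disjoint U)) (hcover : (⋃ α, U α) = Set.univ)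
    (n : ℕ) :
    Function.Bijective (fun (x : (singCohCptSys G X n).lim) (α : ι) =>
      (restrHomOver X G n (U α)).limMap x) ∧
    Function.Bijective (fun (x : (singCohCptSys G X n).lim1) (α : ι) =>
      (restrHomOver X G n (U α)).limDMap 0 x) :=
  lim_and_lim1_of_disjoint_union_general X G U hopen hdisj hcover n

end Paper
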